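/- arXiv:1511.05491 — 2 statements merged into one kernel-verified Lean document; each statement's English description precedes it below -/
import Mathlib

section
/- Let Δ be a symmetric positive definite real p×p matrix, let α be a real p×d matrix with orthonormal columns, and let α0 be a real p×(p−d) matrix whose columns form an orthonormal basis of the orthogonal complement of the column space of α. Then Δ⁻¹α0 = (α0 − α(αᵀΔα)⁻¹αᵀΔα0) · (α0ᵀΔ⁻¹α0). -/
/-!
Since `(α α0)` is orthogonal, `X := Δ⁻¹ α0` splits as `X = α (αᵀ X) + α0 (α0ᵀ X)`. Applying
`αᵀ Δ` to this splitting and using `αᵀ Δ X = αᵀ α0 = 0` gives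
`(αᵀ Δ α) (αᵀ X) = -(αᵀ Δ α0) (α0ᵀ X)`; solving for `αᵀ X` (the block `αᵀ Δ α` is positive
definite, hence invertible) and substituting back gives the identity.
-/

open Matrix

namespace Matrix

variable {R m n k : Type*} [Fintype m] [Fintype n] [Fintype k]

theorem mulVec_injective_of_mul_eq_one [CommSemiring R] [DecidableEq n]
    {A : Matrix m n R} {B : Matrix n m R} (h : B * A = 1) : Function.Injective A.mulVec :=
  Function.LeftInverse.injective (g := B.mulVec) fun x => by rw [mulVec_mulVec, h, one_mulVec]

variable [CommRing R] [DecidableEq m]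

theorem mul_transpose_add_mul_transpose_eq_one [DecidableEq n] [DecidableEq k]
    (e : m ≃ n ⊕ k) {A : Matrix m n R} {B : Matrix m k R}
    (hA : Aᵀ * A = 1) (hB : Bᵀ * B = 1) (hAB : Aᵀ * B = 0) :
    A * Aᵀ + B * Bᵀ = 1 := by
  have hBA : Bᵀ * A = 0 := by simpa using congrArg transpose hAB
  have h : fromRows Aᵀ Bᵀ * fromCols A B = 1 := by
    rw [fromRows_mul_fromCols, hA, hB, hAB, hBA, fromBlocks_one]
  rw [← fromCols_mul_fromRows]
  exact (fromCols_mul_fromRows_eq_one_comm e A B Aᵀ Bᵀ).mpr h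

theorem inv_mul_eq_of_mul_transpose_add_mul_transpose_eq_one [DecidableEq n]
    {Δ : Matrix m m R} {A : Matrix m n R} {B : Matrix m k R}
    (hΔ : IsUnit Δ.det) (hS : IsUnit (Aᵀ * Δ * A).det)
    (hcompl : A * Aᵀ + B * Bᵀ = 1) (hAB : Aᵀ * B = 0) :
    Δ⁻¹ * B = (B - A * (Aᵀ * Δ * A)⁻¹ * (Aᵀ * Δ * B)) * (Bᵀ * Δ⁻¹ * B) := by
  set X := Δ⁻¹ * B
  have hX : X = A * (Aᵀ * X) + B * (Bᵀ * X) := by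
    rw [← Matrix.mul_assoc A Aᵀ X, ← Matrix.mul_assoc B Bᵀ X, ← Matrix.add_mul, hcompl,
      Matrix.one_mul]
  have hΔX : Aᵀ * Δ * A * (Aᵀ * X) + Aᵀ * Δ * B * (Bᵀ * X) = 0 := by
    calc _ = Aᵀ * Δ * X := by
          conv_rhs => rw [hX]
          simp only [Matrix.mul_add, Matrix.mul_assoc]
      _ = 0 := by rw [Matrix.mul_assoc, mul_nonsing_inv_cancel_left _ _ hΔ, hAB]
  have hAX : Aᵀ * X = -((Aᵀ * Δ * A)⁻¹ * (Aᵀ * Δ * B) * (Bᵀ * X)) := by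
    rw [← nonsing_inv_mul_cancel_left _ (Aᵀ * X) hS, eq_neg_of_add_eq_zero_left hΔX]
    simp only [Matrix.mul_neg, Matrix.mul_assoc]
  calc X = A * (Aᵀ * X) + B * (Bᵀ * X) := hX
    _ = _ := by
      rw [hAX, Matrix.sub_mul]
      simp only [Matrix.mul_neg, Matrix.mul_assoc, X]
      abel

end Matrix

theorem delta_inv_alpha0_identity_general
    (p d : ℕ) (hdp : d < p)
    (Δ : Matrix (Fin p) (Fin p) ℝ) (hΔ : Δ.PosDef)
    (α : Matrix (Fin p) (Fin d) ℝ) (hα : αᵀ * α = 1)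
    (α0 : Matrix (Fin p) (Fin (p - d)) ℝ) (hα0 : α0ᵀ * α0 = 1)
    (horth : αᵀ * α0 = 0) :
    Δ⁻¹ * α0 = (α0 - α * (αᵀ * Δ * α)⁻¹ * (αᵀ * Δ * α0)) * (α0ᵀ * Δ⁻¹ * α0) := by
  have hS : (αᵀ * Δ * α).PosDef :=
    hΔ.conjTranspose_mul_mul_same (mulVec_injective_of_mul_eq_one hα)
  have e : Fin p ≃ Fin d ⊕ Fin (p - d) := (finSumFinEquiv.trans (finCongr (by omega))).symm
  exact inv_mul_eq_of_mul_transpose_add_mul_transpose_eq_one hΔ.det_pos.ne'.isUnit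
    hS.det_pos.ne'.isUnit (mul_transpose_add_mul_transpose_eq_one e hα hα0 horth) horth

theorem delta_inv_alpha0_identity
    (p d : ℕ) (hd : 0 < d) (hdp : d < p)
    (Δ : Matrix (Fin p) (Fin p) ℝ) (hΔ : Δ.PosDef)
    (α : Matrix (Fin p) (Fin d) ℝ) (hα : αᵀ * α = 1)
    (α0 : Matrix (Fin p) (Fin (p - d)) ℝ) (hα0 : α0ᵀ * α0 = 1)
    (horth : αᵀ * α0 = 0) :
    Δ⁻¹ * α0 = (α0 - α * (αᵀ * Δ * α)⁻¹ * (αᵀ * Δ * α0)) * (α0ᵀ * Δ⁻¹ * α0) :=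
  delta_inv_alpha0_identity_general p d hdp Δ hΔ α hα α0 hα0 horth
end

section
/- Let Δ be a symmetric positive definite real p×p matrix, let α be a real p×d matrix with orthonormal columns, and let α0 be a real p×(p−d) matrix whose columns form an orthonormal basis of the orthogonal complement of the column space of α. Define H1 = αᵀΔα, H2 = (α0ᵀΔ⁻¹α0)⁻¹, and H3 = (αᵀΔα)⁻¹αᵀΔα0. Then Δ⁻¹ = α H1⁻¹ αᵀ + (α0 − α H3) H2⁻¹ (α0ᵀ − H3ᵀαᵀ). -/
/-!
Write `A = αᵀΔα` and `W = α0 - α H3`. Completeness `ααᵀ + α0α0ᵀ = 1` of the orthonormal frame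
splits the identity as `1 = αA⁻¹αᵀΔ + Wα0ᵀ` (the `Δ`-orthogonal projection onto the column space
of `α` plus its complement). Multiplying on the right by `Δ⁻¹` gives
`Δ⁻¹ = αA⁻¹αᵀ + W α0ᵀΔ⁻¹`, and multiplying the transposed splitting on the left by `α0ᵀΔ⁻¹`
gives `α0ᵀΔ⁻¹ = (α0ᵀΔ⁻¹α0) Wᵀ`. Finally `H2⁻¹ = α0ᵀΔ⁻¹α0` because that matrix is positive
definite, hence invertible.
-/

open Matrix

namespace Matrix

section CommRing

variable {R : Type*} [CommRing R] {m n o : Type*} [Fintype m] [Fintype n] [Fintype o]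
  [DecidableEq m] [DecidableEq n]

theorem mul_transpose_add_mul_transpose_eq_one_s4 [DecidableEq o] (e : m ≃ n ⊕ o) {α : Matrix m n R}
    {α0 : Matrix m o R} (hα : αᵀ * α = 1) (hα0 : α0ᵀ * α0 = 1) (horth : αᵀ * α0 = 0) :
    α * αᵀ + α0 * α0ᵀ = 1 := by
  have horth' : α0ᵀ * α = 0 := by simpa using congrArg transpose horth
  rw [← fromCols_mul_fromRows, fromCols_mul_fromRows_eq_one_comm e, fromRows_mul_fromCols,
    hα, hα0, horth, horth', fromBlocks_one]

variable {Δ : Matrix m m R} {α : Matrix m n R} {α0 : Matrix m o R}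

theorem mul_inv_mul_transpose_mul_add_eq_one (hcompl : α * αᵀ + α0 * α0ᵀ = 1)
    (hA : IsUnit (αᵀ * Δ * α).det) :
    α * (αᵀ * Δ * α)⁻¹ * αᵀ * Δ + (α0 - α * ((αᵀ * Δ * α)⁻¹ * (αᵀ * Δ * α0))) * α0ᵀ = 1 :=
  calc _ = α * (αᵀ * Δ * α)⁻¹ * αᵀ * Δ * (α * αᵀ + α0 * α0ᵀ)
        + (α0 - α * ((αᵀ * Δ * α)⁻¹ * (αᵀ * Δ * α0))) * α0ᵀ := by rw [hcompl, Matrix.mul_one]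
    _ = α * ((αᵀ * Δ * α)⁻¹ * (αᵀ * Δ * α)) * αᵀ + α0 * α0ᵀ := by
        simp only [Matrix.mul_add, Matrix.sub_mul, Matrix.mul_assoc]
        abel
    _ = 1 := by rw [nonsing_inv_mul _ hA, Matrix.mul_one, hcompl]

theorem inv_eq_of_mul_transpose_add_mul_transpose_eq_one (hΔ : Δᵀ = Δ) (hΔdet : IsUnit Δ.det)
    (hA : IsUnit (αᵀ * Δ * α).det) (hcompl : α * αᵀ + α0 * α0ᵀ = 1) (horth : α0ᵀ * α = 0) :
    Δ⁻¹ = α * (αᵀ * Δ * α)⁻¹ * αᵀ + (α0 - α * ((αᵀ * Δ * α)⁻¹ * (αᵀ * Δ * α0)))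
      * (α0ᵀ * Δ⁻¹ * α0) * (α0 - α * ((αᵀ * Δ * α)⁻¹ * (αᵀ * Δ * α0)))ᵀ := by
  set A := αᵀ * Δ * α
  set W := α0 - α * (A⁻¹ * (αᵀ * Δ * α0))
  have hsplit : α * A⁻¹ * αᵀ * Δ + W * α0ᵀ = 1 := mul_inv_mul_transpose_mul_add_eq_one hcompl hA
  have hsplit_transpose : Δ * (α * (A⁻¹ᵀ * αᵀ)) + α0 * Wᵀ = 1 := by
    simpa [hΔ, Matrix.mul_assoc] using congrArg transpose hsplit
  have hrow : α0ᵀ * Δ⁻¹ = α0ᵀ * Δ⁻¹ * α0 * Wᵀ :=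
    calc α0ᵀ * Δ⁻¹ = α0ᵀ * Δ⁻¹ * (Δ * (α * (A⁻¹ᵀ * αᵀ)) + α0 * Wᵀ) := by
          rw [hsplit_transpose, Matrix.mul_one]
      _ = α0ᵀ * (Δ⁻¹ * Δ) * α * (A⁻¹ᵀ * αᵀ) + α0ᵀ * Δ⁻¹ * α0 * Wᵀ := by
          simp only [Matrix.mul_add, Matrix.mul_assoc]
      _ = α0ᵀ * Δ⁻¹ * α0 * Wᵀ := by
          rw [nonsing_inv_mul _ hΔdet, Matrix.mul_one, horth, Matrix.zero_mul, zero_add]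
  calc Δ⁻¹ = (α * A⁻¹ * αᵀ * Δ + W * α0ᵀ) * Δ⁻¹ := by rw [hsplit, Matrix.one_mul]
    _ = α * A⁻¹ * αᵀ * (Δ * Δ⁻¹) + W * (α0ᵀ * Δ⁻¹) := by
        simp only [Matrix.add_mul, Matrix.mul_assoc]
    _ = α * A⁻¹ * αᵀ + W * (α0ᵀ * Δ⁻¹ * α0) * Wᵀ := by
        rw [mul_nonsing_inv _ hΔdet, Matrix.mul_one, Matrix.mul_assoc W, ← hrow]

end CommRing

theorem PosDef.transpose_mul_mul_same_of_transpose_mul_self_eq_one {m n : Type*} [Fintype m]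
    [Fintype n] [DecidableEq n] {Δ : Matrix m m ℝ} (hΔ : Δ.PosDef) {B : Matrix m n ℝ}
    (hB : Bᵀ * B = 1) : (Bᵀ * Δ * B).PosDef := by
  have hinj : Function.Injective B.mulVec :=
    Function.LeftInverse.injective (g := Bᵀ.mulVec) fun x => by
      rw [mulVec_mulVec, hB, one_mulVec]
  simpa using hΔ.conjTranspose_mul_mul_same hinj

end Matrix

theorem delta_inverse_H_decomposition_general
    (p d : ℕ) (hdp : d < p)
    (Δ : Matrix (Fin p) (Fin p) ℝ) (hΔ : Δ.PosDef)
    (α : Matrix (Fin p) (Fin d) ℝ) (hα : αᵀ * α = 1)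
    (α0 : Matrix (Fin p) (Fin (p - d)) ℝ) (hα0 : α0ᵀ * α0 = 1)
    (horth : αᵀ * α0 = 0)
    (H1 : Matrix (Fin d) (Fin d) ℝ) (hH1 : H1 = αᵀ * Δ * α)
    (H2 : Matrix (Fin (p - d)) (Fin (p - d)) ℝ) (hH2 : H2 = (α0ᵀ * Δ⁻¹ * α0)⁻¹)
    (H3 : Matrix (Fin d) (Fin (p - d)) ℝ) (hH3 : H3 = (αᵀ * Δ * α)⁻¹ * (αᵀ * Δ * α0)) :
    Δ⁻¹ = α * H1⁻¹ * αᵀ + (α0 - α * H3) * H2⁻¹ * (α0ᵀ - H3ᵀ * αᵀ) := by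
  subst hH1 hH2 hH3
  have e : Fin p ≃ Fin d ⊕ Fin (p - d) := (finCongr (by omega)).trans finSumFinEquiv.symm
  have hcompl := mul_transpose_add_mul_transpose_eq_one_s4 e hα hα0 horth
  have horth' : α0ᵀ * α = 0 := by simpa using congrArg transpose horth
  have hA := (hΔ.transpose_mul_mul_same_of_transpose_mul_self_eq_one hα).isUnit
  have hM := (hΔ.inv.transpose_mul_mul_same_of_transpose_mul_self_eq_one hα0).isUnit
  rw [isUnit_iff_isUnit_det] at hA hM
  rw [nonsing_inv_nonsing_inv _ hM, ← transpose_mul, ← transpose_sub]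
  exact inv_eq_of_mul_transpose_add_mul_transpose_eq_one hΔ.isHermitian.eq
    (isUnit_iff_isUnit_det _ |>.1 hΔ.isUnit) hA hcompl horth'

theorem delta_inverse_H_decomposition
    (p d : ℕ) (hd : 0 < d) (hdp : d < p)
    (Δ : Matrix (Fin p) (Fin p) ℝ) (hΔ : Δ.PosDef)
    (α : Matrix (Fin p) (Fin d) ℝ) (hα : αᵀ * α = 1)
    (α0 : Matrix (Fin p) (Fin (p - d)) ℝ) (hα0 : α0ᵀ * α0 = 1)
    (horth : αᵀ * α0 = 0)
    (H1 : Matrix (Fin d) (Fin d) ℝ) (hH1 : H1 = αᵀ * Δ * α)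
    (H2 : Matrix (Fin (p - d)) (Fin (p - d)) ℝ) (hH2 : H2 = (α0ᵀ * Δ⁻¹ * α0)⁻¹)
    (H3 : Matrix (Fin d) (Fin (p - d)) ℝ) (hH3 : H3 = (αᵀ * Δ * α)⁻¹ * (αᵀ * Δ * α0)) :
    Δ⁻¹ = α * H1⁻¹ * αᵀ + (α0 - α * H3) * H2⁻¹ * (α0ᵀ - H3ᵀ * αᵀ) :=
  delta_inverse_H_decomposition_general p d hdp Δ hΔ α hα α0 hα0 horth H1 hH1 H2 hH2 H3 hH3
end
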